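/- arXiv:2510.06316 — 6 statements merged into one kernel-verified Lean document; each statement's English description precedes it below -/
import Mathlib

section
/- If J and K are matrices with ‖J‖, ‖K‖ ≤ 1 − ξ for some 0 < ξ < 1, then ‖J − K‖ ≤ (1/ξ)·‖e^{-iJ} − e^{-iK}‖. -/
/-- Spectral (L2 operator) norm on square complex matrices. -/
noncomputable instance matSpectralNormedRing {m : Type*} [Fintype m] [DecidableEq m] :
    NormedRing (Matrix m m ℂ) := Matrix.instL2OpNormedRing

noncomputable instance matSpectralNormedAlgebra {m : Type*} [Fintype m] [DecidableEq m] :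
    NormedAlgebra ℂ (Matrix m m ℂ) := Matrix.instL2OpNormedAlgebra


/-!
Put `X = -iJ/2`, `Y = -iK/2`, `u = 1 - ξ` and let `T Z = X Z - Z Y` be the Sylvester operator
on the algebra. Then `e^{±T} 1 = e^{±X} e^{∓Y}`, so
`e^T 1 - e^{-T} 1 = e^{iJ/2} (e^{-iJ} - e^{-iK}) e^{iK/2}` has norm at most
`e^u ‖e^{-iJ} - e^{-iK}‖`.
In the Taylor expansion of `e^T 1 - e^{-T} 1` the even terms cancel, the linear term is
`2 T 1 = -i (J - K)`, and since `‖T^k 1‖ ≤ ‖T‖^{k-1} ‖T 1‖` with `‖T‖ ≤ u` the rest is at most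
`(2/9) u² ‖J - K‖`. Hence `(1 - 2u²/9) ‖J - K‖ ≤ e^u ‖e^{-iJ} - e^{-iK}‖`, and
`(1 - u) e^u ≤ 1 - u²/2` finishes the proof.
-/

open NormedSpace ContinuousLinearMap
open scoped Nat

theorem Real.one_sub_mul_exp_le {u : ℝ} (hu0 : 0 ≤ u) (hu1 : u ≤ 1) :
    (1 - u) * Real.exp u ≤ 1 - u ^ 2 / 2 := by
  have h := Real.exp_bound' hu0 hu1 (n := 3) (by norm_num)
  norm_num [Finset.sum_range_succ, Nat.factorial] at h
  nlinarith [mul_le_mul_of_nonneg_left h (sub_nonneg.2 hu1), pow_nonneg hu0 3, pow_nonneg hu0 4]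

theorem inv_factorial_add_three_le (k : ℕ) : ((k + 3)! : ℝ)⁻¹ ≤ 6⁻¹ * (4⁻¹) ^ k := by
  have h : (3 ! * 4 ^ k : ℝ) ≤ (3 + k)! := by exact_mod_cast Nat.factorial_mul_pow_le_factorial
  rw [inv_pow, ← mul_inv, add_comm k]
  exact inv_anti₀ (by positivity) (by simpa [Nat.factorial] using h)

section OperatorExp

variable {𝕜 E : Type*} [RCLike 𝕜] [NormedAddCommGroup E] [NormedSpace 𝕜 E]

theorem ContinuousLinearMap.norm_pow_apply_le (T : E →L[𝕜] E) (k : ℕ) (x : E) :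
    ‖(T ^ k) x‖ ≤ ‖T‖ ^ k * ‖x‖ := by
  induction k with
  | zero => simp
  | succ k ih =>
    rw [pow_succ', mul_apply_eq_comp, pow_succ', mul_assoc]
    exact (T.le_opNorm _).trans (by gcongr)

variable [CompleteSpace E]

theorem norm_exp_apply_sub_quadratic_le (T : E →L[𝕜] E) (hT : ‖T‖ ≤ 1) (x : E) :
    ‖exp T x - (x + T x + (2 : 𝕜)⁻¹ • T (T x))‖ ≤ 2 / 9 * ‖T‖ ^ 2 * ‖T x‖ := by
  have hexp : HasSum (fun k => ((k ! : 𝕜)⁻¹) • (T ^ k) x) (exp T x) := by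
    simpa using (exp_series_hasSum_exp' (𝕂 := 𝕜) T).mapL (apply 𝕜 E x)
  have htail : HasSum (fun k => (((k + 3)! : 𝕜)⁻¹) • (T ^ (k + 3)) x)
      (exp T x - (x + T x + (2 : 𝕜)⁻¹ • T (T x))) := by
    rw [← hasSum_nat_add_iff' 3] at hexp
    simpa [Finset.sum_range_succ, pow_succ, add_assoc] using hexp
  have hgeom := (hasSum_geometric_of_lt_one (r := (4⁻¹ : ℝ)) (by norm_num) (by norm_num)).mul_left
    (6⁻¹ * ‖T‖ ^ 2 * ‖T x‖)
  refine (htail.norm_le_of_bounded hgeom fun k => ?_).trans_eq (by ring)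
  rw [norm_smul, norm_inv, RCLike.norm_natCast, pow_succ, mul_apply_eq_comp]
  calc ((k + 3)! : ℝ)⁻¹ * ‖(T ^ (k + 2)) (T x)‖
      ≤ (6⁻¹ * (4⁻¹) ^ k) * (‖T‖ ^ 2 * ‖T x‖) := by
        gcongr
        · exact inv_factorial_add_three_le k
        · calc ‖(T ^ (k + 2)) (T x)‖ ≤ ‖T‖ ^ (k + 2) * ‖T x‖ := T.norm_pow_apply_le _ _
            _ ≤ ‖T‖ ^ 2 * ‖T x‖ := by
              gcongr ?_ * _
              exact pow_le_pow_of_le_one (norm_nonneg T) hT (by omega)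
    _ = 6⁻¹ * ‖T‖ ^ 2 * ‖T x‖ * (4⁻¹) ^ k := by ring

theorem norm_exp_apply_sub_exp_neg_apply_sub_two_smul_le (T : E →L[𝕜] E) (hT : ‖T‖ ≤ 1)
    (x : E) : ‖exp T x - exp (-T) x - (2 : 𝕜) • T x‖ ≤ 4 / 9 * ‖T‖ ^ 2 * ‖T x‖ := by
  have hpos := norm_exp_apply_sub_quadratic_le T hT x
  have hneg := norm_exp_apply_sub_quadratic_le (-T) (by rwa [norm_neg]) x
  simp only [neg_apply, map_neg, neg_neg, norm_neg] at hneg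
  calc ‖exp T x - exp (-T) x - (2 : 𝕜) • T x‖
      = ‖(exp T x - (x + T x + (2 : 𝕜)⁻¹ • T (T x)))
          - (exp (-T) x - (x + -T x + (2 : 𝕜)⁻¹ • T (T x)))‖ := by
        congr 1; module
    _ ≤ _ := norm_sub_le _ _
    _ ≤ 4 / 9 * ‖T‖ ^ 2 * ‖T x‖ := by linarith

end OperatorExp

theorem mem_eball_expSeries_radius (𝕜 : Type*) {𝔸 : Type*} [RCLike 𝕜] [NormedRing 𝔸]
    [NormedAlgebra 𝕜 𝔸] (x : 𝔸) : x ∈ Metric.eball (0 : 𝔸) (expSeries 𝕜 𝔸).radius := by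
  simp [expSeries_radius_eq_top]

-- A hypothesis rather than `NormOneClass 𝔸`: the identity matrix of size zero has norm `0`.
theorem norm_exp_le_exp_norm (𝕜 : Type*) {𝔸 : Type*} [RCLike 𝕜] [NormedRing 𝔸]
    [NormedAlgebra 𝕜 𝔸] [CompleteSpace 𝔸] (h1 : ‖(1 : 𝔸)‖ ≤ 1) (x : 𝔸) :
    ‖exp x‖ ≤ Real.exp ‖x‖ := by
  refine (exp_series_hasSum_exp' (𝕂 := 𝕜) x).norm_le_of_bounded
    (by simpa [Real.exp_eq_exp_ℝ] using expSeries_div_hasSum_exp ‖x‖) fun k => ?_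
  rw [norm_smul, norm_inv, RCLike.norm_natCast, div_eq_inv_mul]
  gcongr
  cases k with
  | zero => simpa using h1
  | succ k => exact norm_pow_le' x k.succ_pos

section Sylvester

variable (𝕜 : Type*) {𝔸 : Type*} [RCLike 𝕜] [NormedRing 𝔸] [NormedAlgebra 𝕜 𝔸]

noncomputable def mulLeftRingHom : 𝔸 →+* (𝔸 →L[𝕜] 𝔸) where
  toFun := mul 𝕜 𝔸
  map_one' := by ext; simp
  map_mul' _ _ := by ext; simp [mul_assoc]
  map_zero' := map_zero _
  map_add' := map_add _

noncomputable def mulRightRingHom : 𝔸ᵐᵒᵖ →+* (𝔸 →L[𝕜] 𝔸) where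
  toFun b := (mul 𝕜 𝔸).flip b.unop
  map_one' := by ext; simp
  map_mul' _ _ := by ext; simp [mul_assoc]
  map_zero' := by simp
  map_add' _ _ := by simp

noncomputable def sylvesterOp (X Y : 𝔸) : 𝔸 →L[𝕜] 𝔸 := mul 𝕜 𝔸 X - (mul 𝕜 𝔸).flip Y

variable {𝕜}

@[simp]
theorem sylvesterOp_apply (X Y Z : 𝔸) : sylvesterOp 𝕜 X Y Z = X * Z - Z * Y := rfl

theorem neg_sylvesterOp (X Y : 𝔸) : -sylvesterOp 𝕜 X Y = sylvesterOp 𝕜 (-X) (-Y) := by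
  ext Z
  simp [sub_eq_add_neg, add_comm]

theorem norm_sylvesterOp_le (X Y : 𝔸) : ‖sylvesterOp 𝕜 X Y‖ ≤ ‖X‖ + ‖Y‖ :=
  (norm_sub_le _ _).trans <| add_le_add (opNorm_mul_apply_le 𝕜 𝔸 X) <|
    (le_of_opNorm_le _ ((opNorm_flip _).trans_le (opNorm_mul_le 𝕜 𝔸)) Y).trans_eq (one_mul _)

variable [CompleteSpace 𝔸]

theorem exp_sylvesterOp_apply (X Y Z : 𝔸) :
    exp (sylvesterOp 𝕜 X Y) Z = exp X * Z * exp (-Y) := by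
  have hsplit : sylvesterOp 𝕜 X Y = mulLeftRingHom 𝕜 X + mulRightRingHom 𝕜 (.op (-Y)) := by
    ext; simp [mulLeftRingHom, mulRightRingHom, sub_eq_add_neg]
  have hcomm : Commute (mulLeftRingHom 𝕜 X) (mulRightRingHom 𝕜 (.op (-Y))) := by
    ext; simp [mulLeftRingHom, mulRightRingHom, mul_assoc]
  rw [hsplit, exp_add_of_commute_of_mem_ball hcomm (mem_eball_expSeries_radius 𝕜 _)
    (mem_eball_expSeries_radius 𝕜 _), mul_apply_eq_comp,
    ← map_exp_of_mem_ball (mulLeftRingHom 𝕜) (mul 𝕜 𝔸).continuous X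
      (mem_eball_expSeries_radius 𝕜 X),
    ← map_exp_of_mem_ball (mulRightRingHom 𝕜) ((mul 𝕜 𝔸).flip.continuous.comp
      MulOpposite.continuous_unop) _ (mem_eball_expSeries_radius 𝕜 _), exp_op]
  simp [mulLeftRingHom, mulRightRingHom, mul_assoc]

theorem exp_sylvesterOp_apply_one_sub_exp_neg (X Y : 𝔸) :
    exp (sylvesterOp 𝕜 X Y) 1 - exp (-sylvesterOp 𝕜 X Y) 1
      = exp (-X) * (exp (X + X) - exp (Y + Y)) * exp (-Y) := by
  have hexp_add {a b : 𝔸} (h : Commute a b) : exp (a + b) = exp a * exp b :=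
    exp_add_of_commute_of_mem_ball h (mem_eball_expSeries_radius 𝕜 a)
      (mem_eball_expSeries_radius 𝕜 b)
  have hX : exp (-X) * exp X = 1 := by
    rw [← hexp_add (Commute.refl X).neg_left, neg_add_cancel, exp_zero]
  have hY : exp Y * exp (-Y) = 1 := by
    rw [← hexp_add (Commute.refl Y).neg_right, add_neg_cancel, exp_zero]
  rw [neg_sylvesterOp, exp_sylvesterOp_apply, exp_sylvesterOp_apply, neg_neg,
    hexp_add (Commute.refl X), hexp_add (Commute.refl Y), mul_sub, sub_mul, mul_one, mul_one]
  congr 1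
  · rw [← mul_assoc, hX, one_mul]
  · rw [mul_assoc, mul_assoc, hY, mul_one]

end Sylvester

open Complex in
theorem mul_norm_sub_le_norm_exp_sub_exp {𝔸 : Type*} [NormedRing 𝔸] [NormedAlgebra ℂ 𝔸]
    [CompleteSpace 𝔸] (h1 : ‖(1 : 𝔸)‖ ≤ 1) {J K : 𝔸} {ξ : ℝ} (hξ : 0 ≤ ξ)
    (hJ : ‖J‖ ≤ 1 - ξ) (hK : ‖K‖ ≤ 1 - ξ) :
    ξ * ‖J - K‖ ≤ ‖exp ((-I) • J) - exp ((-I) • K)‖ := by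
  set u := 1 - ξ
  set D := exp ((-I) • J) - exp ((-I) • K)
  set X := (-I / 2) • J
  set Y := (-I / 2) • K
  set T := sylvesterOp ℂ X Y
  have hhalf : ‖(-I / 2 : ℂ)‖ = 1 / 2 := by simp
  have hX : ‖X‖ ≤ u / 2 := by simp only [X, norm_smul, hhalf]; linarith
  have hY : ‖Y‖ ≤ u / 2 := by simp only [Y, norm_smul, hhalf]; linarith
  have hT : ‖T‖ ≤ u := (norm_sylvesterOp_le X Y).trans (by linarith)
  have hT1 : ‖T 1‖ = ‖J - K‖ / 2 := by
    simp only [T, sylvesterOp_apply, mul_one, one_mul, X, Y, ← smul_sub, norm_smul, hhalf]; ring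
  have hlinear : ‖(2 : ℂ) • T 1‖ = ‖J - K‖ := by rw [norm_smul, hT1]; norm_num; ring
  have hodd : ‖exp T 1 - exp (-T) 1‖ ≤ Real.exp u * ‖D‖ := by
    have hXX : X + X = (-I) • J := by simp only [X, ← add_smul]; ring_nf
    have hYY : Y + Y = (-I) • K := by simp only [Y, ← add_smul]; ring_nf
    have hexp_neg {Z : 𝔸} (hZ : ‖Z‖ ≤ u / 2) : ‖exp (-Z)‖ ≤ Real.exp (u / 2) :=
      (norm_exp_le_exp_norm ℂ h1 _).trans (Real.exp_le_exp.2 (by rwa [norm_neg]))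
    rw [exp_sylvesterOp_apply_one_sub_exp_neg, hXX, hYY]
    calc _ ≤ ‖exp (-X)‖ * ‖D‖ * ‖exp (-Y)‖ := norm_mul₃_le
      _ ≤ Real.exp (u / 2) * ‖D‖ * Real.exp (u / 2) := by
        gcongr
        exacts [hexp_neg hX, hexp_neg hY]
      _ = Real.exp u * ‖D‖ := by rw [mul_right_comm, ← Real.exp_add, add_halves]
  have htail : ‖exp T 1 - exp (-T) 1 - (2 : ℂ) • T 1‖ ≤ 2 / 9 * u ^ 2 * ‖J - K‖ := by
    refine (norm_exp_apply_sub_exp_neg_apply_sub_two_smul_le T (hT.trans (by linarith)) 1).trans ?_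
    rw [hT1]
    have : ‖T‖ ^ 2 ≤ u ^ 2 := pow_le_pow_left₀ (norm_nonneg T) hT 2
    nlinarith [norm_nonneg (J - K)]
  have hmain : ‖J - K‖ ≤ Real.exp u * ‖D‖ + 2 / 9 * u ^ 2 * ‖J - K‖ := by
    calc ‖J - K‖ = ‖(exp T 1 - exp (-T) 1) - (exp T 1 - exp (-T) 1 - (2 : ℂ) • T 1)‖ := by
          rw [sub_sub_cancel, hlinear]
      _ ≤ _ := norm_sub_le _ _
      _ ≤ _ := add_le_add hodd htail
  have hu := Real.one_sub_mul_exp_le (u := u) ((norm_nonneg J).trans hJ) (by linarith)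
  refine le_of_mul_le_mul_left ?_ (Real.exp_pos u)
  nlinarith [mul_le_mul_of_nonneg_right hu (norm_nonneg (J - K)), sq_nonneg u,
    norm_nonneg (J - K)]

theorem Matrix.l2_opNorm_one_le {m : Type*} [Fintype m] [DecidableEq m] :
    ‖(1 : Matrix m m ℂ)‖ ≤ 1 := by
  rw [Matrix.cstar_norm_def, map_one]
  exact ContinuousLinearMap.norm_id_le

theorem norm_sub_le_inv_mul_norm_exp_sub_exp_general {n : ℕ} (J K : Matrix (Fin n) (Fin n) ℂ)
    (ξ : ℝ) (hξ0 : 0 < ξ)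
    (hJ : ‖J‖ ≤ 1 - ξ) (hK : ‖K‖ ≤ 1 - ξ) :
    ‖J - K‖ ≤ (1 / ξ) *
      ‖NormedSpace.exp ((-Complex.I) • J) - NormedSpace.exp ((-Complex.I) • K)‖ := by
  rw [one_div, inv_mul_eq_div, le_div_iff₀ hξ0, mul_comm]
  exact mul_norm_sub_le_norm_exp_sub_exp Matrix.l2_opNorm_one_le hξ0.le hJ hK

/-- If `‖J‖, ‖K‖ ≤ 1 − ξ` with `0 < ξ < 1`, then
`‖J − K‖ ≤ (1/ξ)·‖e^{-iJ} − e^{-iK}‖` in the spectral norm. -/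
theorem norm_sub_le_inv_mul_norm_exp_sub_exp {n : ℕ} (J K : Matrix (Fin n) (Fin n) ℂ)
    (ξ : ℝ) (hξ0 : 0 < ξ) (hξ1 : ξ < 1)
    (hJ : ‖J‖ ≤ 1 - ξ) (hK : ‖K‖ ≤ 1 - ξ) :
    ‖J - K‖ ≤ (1 / ξ) *
      ‖NormedSpace.exp ((-Complex.I) • J) - NormedSpace.exp ((-Complex.I) • K)‖ :=
  norm_sub_le_inv_mul_norm_exp_sub_exp_general J K ξ hξ0 hJ hK
end

section
/- For Hermitian matrices J, K and τ ≥ 0, the second-order Lie group commutator formula satisfies ‖e^{-iτJ} e^{-iτK} e^{iτJ} e^{iτK} − e^{-τ²[J,K]}‖ ≤ (τ³/2)‖[J,[J,K]]‖ + (τ³/2)‖[K,[K,J]]‖. -/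
/-!
Write `A = -iτJ` and `B = -iτK`; both are skew-adjoint, so their exponentials are unitaries and
norms may be computed modulo unitary factors. Conjugation by `exp A` gives
`exp A * exp B * exp (-A) = exp B'` with `B' = exp A * B * exp (-A)`, and a second-order Taylor
expansion of `s ↦ exp (sA) B exp (-sA)` gives `‖B' - B - [A,B]‖ ≤ ‖[A,[A,B]]‖ / 2`. The distance
from `exp B' * exp (-B)` to `exp [A,B]` is then at most
`‖exp B' - exp ([A,B] + B)‖ + ‖exp ([A,B] + B) - exp [A,B] * exp B‖`. By Duhamel's formula the
first term is at most `‖B' - B - [A,B]‖`, and the second, a first-order Trotter error, is at most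
`‖[[A,B],B]‖ / 2`.
-/

open NormedSpace Set

attribute [local instance] LieRing.ofAssociativeRing

theorem norm_sub_le_half_of_norm_deriv_le_mul {F : Type*} [NormedAddCommGroup F] [NormedSpace ℝ F]
    {f f' : ℝ → F} {C : ℝ} (hf : ∀ s, HasDerivAt f (f' s) s)
    (bound : ∀ s ∈ Ico (0 : ℝ) 1, ‖f' s‖ ≤ C * s) : ‖f 1 - f 0‖ ≤ C / 2 := by
  have hB (s : ℝ) : HasDerivAt (fun s : ℝ => C * s ^ 2 / 2) (C * s) s :=
    (((hasDerivAt_pow 2 s).const_mul C).div_const 2).congr_deriv (by ring)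
  simpa using image_norm_le_of_norm_deriv_right_le_deriv_boundary (f := fun s => f s - f 0)
    (fun s _ => ((hf s).sub_const _).continuousAt.continuousWithinAt)
    (fun s _ => ((hf s).sub_const _).hasDerivWithinAt) (by simp) hB bound
    (right_mem_Icc.2 zero_le_one)

section RealBanachAlgebra

variable {E : Type*} [NormedRing E] [NormedAlgebra ℝ E]

theorem exp_smul_mul_self (x : E) (t : ℝ) : exp (t • x) * x = x * exp (t • x) :=
  ((Commute.refl x).smul_left t).exp_left.eq

variable [CompleteSpace E]

theorem exp_mul_exp_neg (x : E) : exp x * exp (-x) = 1 := by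
  let : NormedAlgebra ℚ E := .restrictScalars ℚ ℝ E
  rw [← exp_add_of_commute (Commute.refl x).neg_right, add_neg_cancel, exp_zero]

theorem exp_neg_mul_exp (x : E) : exp (-x) * exp x = 1 := by
  simpa using exp_mul_exp_neg (-x)

theorem hasDerivAt_exp_smul_conj (D X : E) (t : ℝ) :
    HasDerivAt (fun s : ℝ => exp (s • D) * X * exp (s • -D))
      (exp (t • D) * ⁅D, X⁆ * exp (t • -D)) t := by
  refine (((hasDerivAt_exp_smul_const D t).mul_const X).mul
    (hasDerivAt_exp_smul_const (-D) t)).congr_deriv ?_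
  rw [exp_smul_mul_self (-D), Ring.lie_def]
  noncomm_ring

end RealBanachAlgebra

section RealCStarAlgebra

variable {E : Type*} [NormedRing E] [NormedAlgebra ℝ E] [CompleteSpace E] [StarRing E]
  [CStarRing E]

theorem exp_mem_unitary {x : E} (hx : x ∈ skewAdjoint E) : exp x ∈ unitary E :=
  let : NormedAlgebra ℚ E := .restrictScalars ℚ ℝ E
  exp_mem_unitary_of_mem_skewAdjoint hx

variable [StarModule ℝ E]

theorem norm_exp_smul_mul_mul_exp_smul {x y : E} (hx : x ∈ skewAdjoint E)
    (hy : y ∈ skewAdjoint E) (s t : ℝ) (z : E) : ‖exp (s • x) * z * exp (t • y)‖ = ‖z‖ := by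
  rw [CStarRing.norm_mul_mem_unitary _ (exp_mem_unitary (skewAdjoint.smul_mem t hy)),
    CStarRing.norm_mem_unitary_mul _ (exp_mem_unitary (skewAdjoint.smul_mem s hx))]

theorem norm_exp_mul_sub_mul_exp_le {D : E} (hD : D ∈ skewAdjoint E) (X : E) :
    ‖exp D * X - X * exp D‖ ≤ ‖⁅D, X⁆‖ := by
  have key := norm_image_sub_le_of_norm_deriv_le_segment_01'
    (fun s _ => (hasDerivAt_exp_smul_conj D X s).hasDerivWithinAt)
    (fun s _ => (norm_exp_smul_mul_mul_exp_smul hD (neg_mem hD) s s _).le)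
  simp only [one_smul, zero_smul, exp_zero, mul_one, one_mul] at key
  calc ‖exp D * X - X * exp D‖ = ‖(exp D * X - X * exp D) * exp (-D)‖ :=
        (CStarRing.norm_mul_mem_unitary _ (exp_mem_unitary (neg_mem hD))).symm
    _ = ‖exp D * X * exp (-D) - X‖ := by rw [sub_mul, mul_assoc X, exp_mul_exp_neg, mul_one]
    _ ≤ ‖⁅D, X⁆‖ := key

theorem norm_exp_mul_mul_exp_neg_sub_sub_lie_le {A : E} (hA : A ∈ skewAdjoint E) (B : E) :
    ‖exp A * B * exp (-A) - B - ⁅A, B⁆‖ ≤ ‖⁅A, ⁅A, B⁆⁆‖ / 2 := by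
  have hφ (s : ℝ) : HasDerivAt (fun s : ℝ => exp (s • A) * B * exp (s • -A) - B - s • ⁅A, B⁆)
      (exp (s • A) * ⁅A, B⁆ * exp (s • -A) - ⁅A, B⁆) s :=
    ((hasDerivAt_exp_smul_conj A B s).sub_const B).sub ((hasDerivAt_id s).smul_const _)
      |>.congr_deriv (by simp)
  have bound (s : ℝ) (hs : s ∈ Ico (0 : ℝ) 1) :
      ‖exp (s • A) * ⁅A, B⁆ * exp (s • -A) - ⁅A, B⁆‖ ≤ ‖⁅A, ⁅A, B⁆⁆‖ * s :=
    calc ‖exp (s • A) * ⁅A, B⁆ * exp (s • -A) - ⁅A, B⁆‖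
        = ‖(exp (s • A) * ⁅A, B⁆ - ⁅A, B⁆ * exp (s • A)) * exp (s • -A)‖ := by
          rw [sub_mul, mul_assoc ⁅A, B⁆, smul_neg, exp_mul_exp_neg, mul_one]
      _ = ‖exp (s • A) * ⁅A, B⁆ - ⁅A, B⁆ * exp (s • A)‖ :=
          CStarRing.norm_mul_mem_unitary _ (exp_mem_unitary (skewAdjoint.smul_mem s (neg_mem hA)))
      _ ≤ ‖⁅s • A, ⁅A, B⁆⁆‖ := norm_exp_mul_sub_mul_exp_le (skewAdjoint.smul_mem s hA) _
      _ = ‖⁅A, ⁅A, B⁆⁆‖ * s := by rw [smul_lie, norm_smul, Real.norm_of_nonneg hs.1, mul_comm]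
  simpa using norm_sub_le_half_of_norm_deriv_le_mul hφ bound

theorem norm_exp_sub_exp_le {X Y : E} (hX : X ∈ skewAdjoint E) (hY : Y ∈ skewAdjoint E) :
    ‖exp X - exp Y‖ ≤ ‖X - Y‖ := by
  have hh (s : ℝ) : HasDerivAt (fun s : ℝ => exp (s • -Y) * exp (s • X))
      (exp (s • -Y) * (X - Y) * exp (s • X)) s :=
    ((hasDerivAt_exp_smul_const (-Y) s).mul (hasDerivAt_exp_smul_const X s)).congr_deriv (by
      rw [exp_smul_mul_self X]; noncomm_ring)
  have key := norm_image_sub_le_of_norm_deriv_le_segment_01' (fun s _ => (hh s).hasDerivWithinAt)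
    (fun s _ => (norm_exp_smul_mul_mul_exp_smul (neg_mem hY) hX s s _).le)
  simp only [one_smul, zero_smul, exp_zero, mul_one] at key
  calc ‖exp X - exp Y‖ = ‖exp (-Y) * (exp X - exp Y)‖ :=
        (CStarRing.norm_mem_unitary_mul _ (exp_mem_unitary (neg_mem hY))).symm
    _ = ‖exp (-Y) * exp X - 1‖ := by rw [mul_sub, exp_neg_mul_exp]
    _ ≤ ‖X - Y‖ := key

theorem norm_exp_add_sub_exp_mul_exp_le {X Y : E} (hX : X ∈ skewAdjoint E)
    (hY : Y ∈ skewAdjoint E) : ‖exp (X + Y) - exp X * exp Y‖ ≤ ‖⁅X, Y⁆‖ / 2 := by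
  have hg (s : ℝ) : HasDerivAt (fun s : ℝ => exp (s • -(X + Y)) * exp (s • X) * exp (s • Y))
      (exp (s • -(X + Y)) * (exp (s • X) * Y - Y * exp (s • X)) * exp (s • Y)) s :=
    (((hasDerivAt_exp_smul_const _ s).mul (hasDerivAt_exp_smul_const X s)).mul
      (hasDerivAt_exp_smul_const Y s)).congr_deriv (by
        simp only [Pi.mul_apply, exp_smul_mul_self X, exp_smul_mul_self Y]; noncomm_ring)
  have bound (s : ℝ) (hs : s ∈ Ico (0 : ℝ) 1) :
      ‖exp (s • -(X + Y)) * (exp (s • X) * Y - Y * exp (s • X)) * exp (s • Y)‖ ≤ ‖⁅X, Y⁆‖ * s :=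
    calc _ = ‖exp (s • X) * Y - Y * exp (s • X)‖ :=
          norm_exp_smul_mul_mul_exp_smul (neg_mem (add_mem hX hY)) hY s s _
      _ ≤ ‖⁅s • X, Y⁆‖ := norm_exp_mul_sub_mul_exp_le (skewAdjoint.smul_mem s hX) _
      _ = ‖⁅X, Y⁆‖ * s := by rw [smul_lie, norm_smul, Real.norm_of_nonneg hs.1, mul_comm]
  have key := norm_sub_le_half_of_norm_deriv_le_mul hg bound
  simp only [one_smul, zero_smul, exp_zero, mul_one] at key
  calc ‖exp (X + Y) - exp X * exp Y‖ = ‖exp (-(X + Y)) * (exp (X + Y) - exp X * exp Y)‖ :=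
        (CStarRing.norm_mem_unitary_mul _ (exp_mem_unitary (neg_mem (add_mem hX hY)))).symm
    _ = ‖exp (-(X + Y)) * exp X * exp Y - 1‖ := by
        rw [mul_sub, exp_neg_mul_exp, ← norm_neg, neg_sub, mul_assoc]
    _ ≤ ‖⁅X, Y⁆‖ / 2 := key

theorem norm_exp_mul_exp_mul_exp_neg_mul_exp_neg_sub_exp_lie_le {A B : E}
    (hA : A ∈ skewAdjoint E) (hB : B ∈ skewAdjoint E) :
    ‖exp A * exp B * exp (-A) * exp (-B) - exp ⁅A, B⁆‖ ≤
      ‖⁅A, ⁅A, B⁆⁆‖ / 2 + ‖⁅B, ⁅B, A⁆⁆‖ / 2 := by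
  let : NormedAlgebra ℚ E := .restrictScalars ℚ ℝ E
  set B' := exp A * B * exp (-A)
  have hB' : B' ∈ skewAdjoint E := by
    simpa [B', star_exp, skewAdjoint.mem_iff.mp hA] using skewAdjoint.conjugate hB (exp A)
  have hAB : ⁅A, B⁆ ∈ skewAdjoint E := by
    rw [skewAdjoint.mem_iff] at hA hB ⊢
    rw [Ring.lie_def, star_sub, star_mul, star_mul, hA, hB]
    noncomm_ring
  have hconj : exp A * exp B * exp (-A) = exp B' := by
    have h : SemiconjBy (exp A) B B' := by
      simp only [SemiconjBy, B', mul_assoc, exp_neg_mul_exp, mul_one]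
    rw [h.exp_right.eq, mul_assoc, exp_mul_exp_neg, mul_one]
  calc ‖exp A * exp B * exp (-A) * exp (-B) - exp ⁅A, B⁆‖
      = ‖(exp B' * exp (-B) - exp ⁅A, B⁆) * exp B‖ := by
        rw [hconj, CStarRing.norm_mul_mem_unitary _ (exp_mem_unitary hB)]
    _ = ‖exp B' - exp ⁅A, B⁆ * exp B‖ := by rw [sub_mul, mul_assoc, exp_neg_mul_exp, mul_one]
    _ ≤ ‖exp B' - exp (⁅A, B⁆ + B)‖ + ‖exp (⁅A, B⁆ + B) - exp ⁅A, B⁆ * exp B‖ :=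
        norm_sub_le_norm_sub_add_norm_sub _ _ _
    _ ≤ ‖B' - B - ⁅A, B⁆‖ + ‖⁅⁅A, B⁆, B⁆‖ / 2 := by
        rw [← sub_add_eq_sub_sub_swap]
        exact add_le_add (norm_exp_sub_exp_le hB' (add_mem hAB hB))
          (norm_exp_add_sub_exp_mul_exp_le hAB hB)
    _ ≤ ‖⁅A, ⁅A, B⁆⁆‖ / 2 + ‖⁅B, ⁅B, A⁆⁆‖ / 2 := by
        rw [show ⁅⁅A, B⁆, B⁆ = ⁅B, ⁅B, A⁆⁆ by rw [← lie_skew, ← lie_skew B A, lie_neg]]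
        gcongr
        exact norm_exp_mul_mul_exp_neg_sub_sub_lie_le hA B

end RealCStarAlgebra

open NormedSpace in
/-- Commutator error bound for the second-order Lie group commutator
product formula: for Hermitian `J`, `K` and `τ ≥ 0`,
`‖e^{-iτJ} e^{-iτK} e^{iτJ} e^{iτK} − e^{-τ²[J,K]}‖
  ≤ (τ³/2)‖[J,[J,K]]‖ + (τ³/2)‖[K,[K,J]]‖`. -/
theorem group_commutator_second_order_bound {n : ℕ} (J K : Matrix (Fin n) (Fin n) ℂ)
    (hJ : J.IsHermitian) (hK : K.IsHermitian) (τ : ℝ) (hτ : 0 ≤ τ) :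
    ‖exp ((-Complex.I * τ) • J) * exp ((-Complex.I * τ) • K) *
        exp ((Complex.I * τ) • J) * exp ((Complex.I * τ) • K) -
      exp ((-(τ : ℂ) ^ 2) • (J * K - K * J))‖ ≤
    τ ^ 3 / 2 * ‖J * (J * K - K * J) - (J * K - K * J) * J‖ +
      τ ^ 3 / 2 * ‖K * (K * J - J * K) - (K * J - J * K) * K‖ := by
  let : CStarRing (Matrix (Fin n) (Fin n) ℂ) := Matrix.instCStarRing
  set z : ℂ := -Complex.I * τ
  have hz : z ∈ skewAdjoint ℂ := by simp [z, skewAdjoint.mem_iff]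
  have hIz : Complex.I * τ = -z := by ring
  have hz2 : z * z = -(τ : ℂ) ^ 2 := by linear_combination (τ : ℂ) ^ 2 * Complex.I_sq
  have hz1 : ‖z‖ = τ := by simp [z, abs_of_nonneg hτ]
  have hz3 : ‖z * z * z‖ = τ ^ 3 := by rw [norm_mul, norm_mul, hz1]; ring
  have key := norm_exp_mul_exp_mul_exp_neg_mul_exp_neg_sub_exp_lie_le
    (hJ.isSelfAdjoint.smul_mem_skewAdjoint hz) (hK.isSelfAdjoint.smul_mem_skewAdjoint hz)
  simp only [smul_lie, lie_smul, smul_smul, norm_smul] at key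
  rw [hz3, hz2] at key
  rw [hIz, neg_smul, neg_smul]
  simp only [Ring.lie_def] at key
  linarith
end

section
/- If Γ_R and Γ_I are normal matrices satisfying Γ_RΓ_I = −Γ_IΓ_R, Γ_R²Γ_I = Γ_I, and Γ_I²Γ_R = Γ_R, then Γ_R² = Γ_I², Γ_R³ = Γ_R, and Γ_I³ = Γ_I; in particular both Γ_R and Γ_I are Hermitian with all eigenvalues in {−1, 0, 1}. -/
/-!
Anticommutation makes `ΓR²` commute with `ΓI`, so `ΓR² = ΓI² ΓR² = ΓI ΓR² ΓI = ΓI²`; the two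
cubic relations then follow from the hypotheses. An element with `a³ = a` has spectrum in the
roots `{-1, 0, 1}` of `X³ - X`, and a normal matrix with real spectrum is Hermitian, by the
continuous functional calculus of the C⋆-algebra of matrices with the `L²` operator norm.
-/

open Matrix Polynomial

section Anticommute

variable {R : Type*} [Semigroup R] [HasDistribNeg R] {a b : R}

theorem commute_mul_self_of_mul_eq_neg_mul (h : a * b = -(b * a)) : Commute (a * a) b :=
  calc a * a * b = a * (a * b) := mul_assoc a a b
    _ = b * a * a := by rw [h, mul_neg, ← mul_assoc, h, neg_mul, neg_neg]
    _ = b * (a * a) := mul_assoc b a a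

theorem mul_self_eq_mul_self_of_mul_eq_neg_mul (h : a * b = -(b * a))
    (ha : a * a * b = b) (hb : b * b * a = a) : a * a = b * b :=
  calc a * a = b * b * a * a := by rw [hb]
    _ = b * (b * (a * a)) := by simp only [mul_assoc]
    _ = b * (a * a * b) := by rw [(commute_mul_self_of_mul_eq_neg_mul h).eq]
    _ = b * b := by rw [ha]

end Anticommute

namespace spectrum

variable {𝕜 A : Type*} [Field 𝕜] [Ring A] [Algebra 𝕜 A]

theorem eval_eq_zero_of_aeval_eq_zero {a : A} {p : 𝕜[X]} (hp : aeval a p = 0) {z : 𝕜}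
    (hz : z ∈ spectrum 𝕜 a) : p.eval z = 0 := by
  have hmem : p.eval z ∈ spectrum 𝕜 (0 : A) :=
    hp ▸ subset_polynomial_aeval a p (Set.mem_image_of_mem _ hz)
  rcases subsingleton_or_nontrivial A with _ | _
  · simp [of_subsingleton] at hmem
  · simpa using hmem

theorem eq_neg_one_or_eq_zero_or_eq_one_of_mul_self_mul_self_eq {a : A} (ha : a * a * a = a)
    {z : 𝕜} (hz : z ∈ spectrum 𝕜 a) : z = -1 ∨ z = 0 ∨ z = 1 := by
  have hcube : aeval a (X ^ 3 - X : 𝕜[X]) = 0 := by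
    rw [map_sub, map_pow, aeval_X, pow_succ, sq, ha, sub_self]
  have heval := eval_eq_zero_of_aeval_eq_zero hcube hz
  rw [eval_sub, eval_pow, eval_X] at heval
  have hroot : (z + 1) * z * (z - 1) = 0 := by linear_combination heval
  rcases mul_eq_zero.mp hroot with h | h
  · rcases mul_eq_zero.mp h with h | h
    · exact Or.inl (eq_neg_of_add_eq_zero_left h)
    · exact Or.inr (Or.inl h)
  · exact Or.inr (Or.inr (sub_eq_zero.mp h))

end spectrum

theorem IsSelfAdjoint.of_isStarNormal_of_mul_self_mul_self_eq {A : Type*} [TopologicalSpace A]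
    [Ring A] [StarRing A] [Algebra ℂ A] [ContinuousFunctionalCalculus ℂ A IsStarNormal] {a : A} [IsStarNormal a]
    (ha : a * a * a = a) : IsSelfAdjoint a := by
  refine QuasispectrumRestricts.isSelfAdjoint a <|
    SpectrumRestricts.of_subset_range_algebraMap Complex.ofReal_re fun z hz => ?_
  rcases spectrum.eq_neg_one_or_eq_zero_or_eq_one_of_mul_self_mul_self_eq ha hz
    with rfl | rfl | rfl
  exacts [⟨-1, by simp⟩, ⟨0, by simp⟩, ⟨1, by simp⟩]

open scoped Matrix.Norms.L2Operator in
theorem Matrix.IsHermitian.of_normal_of_mul_self_mul_self_eq {n : Type*} [Fintype n]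
    [DecidableEq n] {A : Matrix n n ℂ} (hA : A * Aᴴ = Aᴴ * A) (h : A * A * A = A) :
    A.IsHermitian :=
  have : IsStarNormal A := ⟨hA.symm⟩
  IsSelfAdjoint.of_isStarNormal_of_mul_self_mul_self_eq h

/-- If normal matrices `Γ_R`, `Γ_I` satisfy `Γ_RΓ_I = −Γ_IΓ_R`,
`Γ_R²Γ_I = Γ_I`, and `Γ_I²Γ_R = Γ_R`, then `Γ_R² = Γ_I²`, `Γ_R³ = Γ_R`, `Γ_I³ = Γ_I`;
in particular both are Hermitian with all eigenvalues in `{−1, 0, 1}`. -/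
theorem anticommuting_pair_cubes {n : ℕ} (ΓR ΓI : Matrix (Fin n) (Fin n) ℂ)
    (hR : ΓR * ΓRᴴ = ΓRᴴ * ΓR) (hI : ΓI * ΓIᴴ = ΓIᴴ * ΓI)
    (hanti : ΓR * ΓI = -(ΓI * ΓR))
    (h1 : ΓR * ΓR * ΓI = ΓI) (h2 : ΓI * ΓI * ΓR = ΓR) :
    ΓR * ΓR = ΓI * ΓI ∧ ΓR * ΓR * ΓR = ΓR ∧ ΓI * ΓI * ΓI = ΓI ∧
      ΓR.IsHermitian ∧ ΓI.IsHermitian ∧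
      (∀ z ∈ spectrum ℂ ΓR, z = -1 ∨ z = 0 ∨ z = 1) ∧
      (∀ z ∈ spectrum ℂ ΓI, z = -1 ∨ z = 0 ∨ z = 1) := by
  have hsq : ΓR * ΓR = ΓI * ΓI := mul_self_eq_mul_self_of_mul_eq_neg_mul hanti h1 h2
  have hR3 : ΓR * ΓR * ΓR = ΓR := by rw [hsq, h2]
  have hI3 : ΓI * ΓI * ΓI = ΓI := by rw [← hsq, h1]
  exact ⟨hsq, hR3, hI3, .of_normal_of_mul_self_mul_self_eq hR hR3,
    .of_normal_of_mul_self_mul_self_eq hI hI3,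
    fun _ => spectrum.eq_neg_one_or_eq_zero_or_eq_one_of_mul_self_mul_self_eq hR3,
    fun _ => spectrum.eq_neg_one_or_eq_zero_or_eq_one_of_mul_self_mul_self_eq hI3⟩
end

section
/- For any matrix A with singular value decomposition A = UΣV†, the Hamiltonian block encoding factors as exp(−i[[0, A†],[A, 0]]) = diag(V, U) · [[cos Σ, −i sin Σ],[−i sin Σ, cos Σ]] · diag(V†, U†). -/
/-!
Conjugation by the unitary `diag(V, U)` turns `[[0, A†], [A, 0]]` into `[[0, Σ], [Σ, 0]]`, and the
matrix exponential commutes with unitary conjugation. The block matrix `H = [[1, 1], [1, -1]]`,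
with `H² = 2`, diagonalises `[[0, D], [D, 0]]` for diagonal `D = diag(d)` as `diag(d, -d)`, so its
exponential is `[[cosh D, sinh D], [sinh D, cosh D]]`; at `d = -iσ` these blocks are `cos Σ` and
`-i sin Σ`.
-/

open Matrix

namespace Matrix

variable {m n α 𝔸 : Type*} [Fintype m] [DecidableEq m] [Fintype n] [DecidableEq n]

theorem exp_unitary_conj [NormedRing 𝔸] [NormedAlgebra ℚ 𝔸] [CompleteSpace 𝔸] [StarRing 𝔸]
    {W : Matrix m m 𝔸} (hW : W ∈ unitary (Matrix m m 𝔸)) (M : Matrix m m 𝔸) :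
    NormedSpace.exp (W * M * star W) = W * NormedSpace.exp M * star W :=
  exp_units_conj (Unitary.toUnits ⟨W, hW⟩) M

theorem fromBlocks_mem_unitary [Semiring α] [StarRing α] {V : Matrix m m α} {U : Matrix n n α}
    (hV : V ∈ unitary (Matrix m m α)) (hU : U ∈ unitary (Matrix n n α)) :
    fromBlocks V 0 0 U ∈ unitary (Matrix (m ⊕ n) (m ⊕ n) α) := by
  rw [Unitary.mem_iff, star_eq_conjTranspose, fromBlocks_conjTranspose]
  simp [fromBlocks_multiply, ← star_eq_conjTranspose, Unitary.star_mul_self_of_mem hV,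
    Unitary.star_mul_self_of_mem hU, Unitary.mul_star_self_of_mem hV,
    Unitary.mul_star_self_of_mem hU]

theorem fromBlocks_zero_conjTranspose_mul_mul [Semiring α] [StarRing α]
    (U : Matrix m m α) (D : Matrix m n α) (V : Matrix n n α) :
    fromBlocks 0 (U * D * Vᴴ)ᴴ (U * D * Vᴴ) 0 =
      fromBlocks V 0 0 U * fromBlocks 0 Dᴴ D 0 * (fromBlocks V 0 0 U)ᴴ := by
  simp [fromBlocks_conjTranspose, fromBlocks_multiply, conjTranspose_mul, Matrix.mul_assoc]

theorem fromBlocks_one_one_one_neg_one_mul_self [Ring α] :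
    (fromBlocks 1 1 1 (-1) : Matrix (m ⊕ m) (m ⊕ m) α) * fromBlocks 1 1 1 (-1) = (2 : α) • 1 := by
  rw [fromBlocks_multiply, ← fromBlocks_one, fromBlocks_smul]
  congr 1 <;> simp [two_smul]

theorem exp_fromBlocks_zero_diagonal_diagonal_zero (d : m → ℂ) :
    NormedSpace.exp (fromBlocks 0 (diagonal d) (diagonal d) 0) =
      fromBlocks (diagonal fun i => Complex.cosh (d i)) (diagonal fun i => Complex.sinh (d i))
        (diagonal fun i => Complex.sinh (d i)) (diagonal fun i => Complex.cosh (d i)) := by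
  set H : Matrix (m ⊕ m) (m ⊕ m) ℂ := fromBlocks 1 1 1 (-1)
  have hH : H * H = (2 : ℂ) • 1 := fromBlocks_one_one_one_neg_one_mul_self
  let Hunit : (Matrix (m ⊕ m) (m ⊕ m) ℂ)ˣ :=
    ⟨H, (2 : ℂ)⁻¹ • H,
      by rw [mul_smul_comm, hH, smul_smul, inv_mul_cancel₀ two_ne_zero, one_smul],
      by rw [smul_mul_assoc, hH, smul_smul, inv_mul_cancel₀ two_ne_zero, one_smul]⟩
  have hconj (M : Matrix (m ⊕ m) (m ⊕ m) ℂ) :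
      NormedSpace.exp (H * M * ((2 : ℂ)⁻¹ • H)) = H * NormedSpace.exp M * ((2 : ℂ)⁻¹ • H) :=
    exp_units_conj Hunit M
  have hdiag : fromBlocks 0 (diagonal d) (diagonal d) 0 =
      H * diagonal (Sum.elim d (-d)) * ((2 : ℂ)⁻¹ • H) := by
    rw [← fromBlocks_diagonal, mul_smul_comm, fromBlocks_multiply, fromBlocks_multiply,
      fromBlocks_smul]
    congr 1 <;> ext i j <;> by_cases h : i = j <;> simp [h] <;> ring
  rw [hdiag, hconj, exp_diagonal, Pi.exp_def, ← Function.comp_def, Sum.comp_elim,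
    ← fromBlocks_diagonal, mul_smul_comm, fromBlocks_multiply, fromBlocks_multiply,
    fromBlocks_smul]
  congr 1 <;> ext i j <;> by_cases h : i = j <;>
    simp [h, ← Complex.exp_eq_exp_ℂ, Complex.cosh, Complex.sinh] <;> ring

end Matrix

theorem hamiltonian_block_encoding_svd_factorization_general {n : ℕ}
    (A U V : Matrix (Fin n) (Fin n) ℂ) (σ : Fin n → ℝ)
    (hU : U ∈ Matrix.unitaryGroup (Fin n) ℂ) (hV : V ∈ Matrix.unitaryGroup (Fin n) ℂ)
    (hA : A = U * Matrix.diagonal (fun i => (σ i : ℂ)) * Vᴴ) :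
    NormedSpace.exp ((-Complex.I) • Matrix.fromBlocks 0 Aᴴ A 0) =
      Matrix.fromBlocks V 0 0 U *
        Matrix.fromBlocks
          (Matrix.diagonal fun i => (Real.cos (σ i) : ℂ))
          (Matrix.diagonal fun i => -Complex.I * (Real.sin (σ i) : ℂ))
          (Matrix.diagonal fun i => -Complex.I * (Real.sin (σ i) : ℂ))
          (Matrix.diagonal fun i => (Real.cos (σ i) : ℂ)) *
        Matrix.fromBlocks Vᴴ 0 0 Uᴴ := by
  have hD : (diagonal fun i => (σ i : ℂ))ᴴ = diagonal fun i => (σ i : ℂ) := by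
    simp [diagonal_conjTranspose]
  have hrot : (-Complex.I) • fromBlocks 0 (diagonal fun i => (σ i : ℂ))
        (diagonal fun i => (σ i : ℂ)) 0 =
      fromBlocks 0 (diagonal fun i => -σ i * Complex.I) (diagonal fun i => -σ i * Complex.I) 0 := by
    rw [fromBlocks_smul, smul_zero, ← diagonal_smul]
    congr <;> ext i <;> simp [mul_comm]
  rw [hA, fromBlocks_zero_conjTranspose_mul_mul, hD, ← Matrix.smul_mul, ← Matrix.mul_smul,
    ← star_eq_conjTranspose, exp_unitary_conj (fromBlocks_mem_unitary hV hU), hrot,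
    exp_fromBlocks_zero_diagonal_diagonal_zero, star_eq_conjTranspose, fromBlocks_conjTranspose]
  simp only [neg_mul, Complex.cosh_neg, Complex.sinh_neg, Complex.cosh_mul_I, Complex.sinh_mul_I,
    Complex.ofReal_cos, Complex.ofReal_sin, mul_comm Complex.I, conjTranspose_zero]

/-- For `A = UΣV†` a singular value decomposition (with `U`, `V` unitary
and `Σ = diag(σ)` nonnegative), the Hamiltonian block encoding factors as
`exp(−i[[0,A†],[A,0]]) = diag(V,U) · [[cos Σ, −i sin Σ],[−i sin Σ, cos Σ]] · diag(V†,U†)`. -/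
theorem hamiltonian_block_encoding_svd_factorization {n : ℕ}
    (A U V : Matrix (Fin n) (Fin n) ℂ) (σ : Fin n → ℝ)
    (hU : U ∈ Matrix.unitaryGroup (Fin n) ℂ) (hV : V ∈ Matrix.unitaryGroup (Fin n) ℂ)
    (hσ : ∀ i, 0 ≤ σ i)
    (hA : A = U * Matrix.diagonal (fun i => (σ i : ℂ)) * Vᴴ) :
    NormedSpace.exp ((-Complex.I) • Matrix.fromBlocks 0 Aᴴ A 0) =
      Matrix.fromBlocks V 0 0 U *
        Matrix.fromBlocks
          (Matrix.diagonal fun i => (Real.cos (σ i) : ℂ))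
          (Matrix.diagonal fun i => -Complex.I * (Real.sin (σ i) : ℂ))
          (Matrix.diagonal fun i => -Complex.I * (Real.sin (σ i) : ℂ))
          (Matrix.diagonal fun i => (Real.cos (σ i) : ℂ)) *
        Matrix.fromBlocks Vᴴ 0 0 Uᴴ :=
  hamiltonian_block_encoding_svd_factorization_general A U V σ hU hV hA
end

section
/- Let f be a real polynomial of degree d. Then for any b > 1, the maximum of |f| on [−b, b] is bounded by cosh(√(2(b−1))·d) times the maximum of |f| on [−1, 1]. -/
/-!
Among polynomials of degree at most `d` bounded by `1` on `[-1, 1]`, the Chebyshev polynomial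
`T_d` is the largest at every `x ≥ 1` (Chebyshev's extremal property), so
`|f x| ≤ M · T_d |x|` once `|x| ≥ 1`. Writing `|x| ≤ b ≤ cosh u` with `u = √(2(b - 1))`, which
holds because `cosh u ≥ 1 + u² / 2`, monotonicity of `T_d (cosh t) = cosh (d t)` in `t ≥ 0`
gives `T_d |x| ≤ cosh (d u)`.
-/

open Polynomial Polynomial.Chebyshev Real

theorem one_add_sq_div_two_le_cosh (x : ℝ) : 1 + x ^ 2 / 2 ≤ cosh x :=
  calc 1 + x ^ 2 / 2 = 1 + 2 * (|x| / 2) ^ 2 := by rw [div_pow, sq_abs]; ring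
    _ ≤ 1 + 2 * sinh (|x| / 2) ^ 2 := by gcongr; exact self_le_sinh_iff.mpr (by positivity)
    _ = cosh (2 * (|x| / 2)) := by rw [cosh_two_mul, cosh_sq]; ring
    _ = cosh x := by rw [mul_div_cancel₀ _ two_ne_zero, cosh_abs]

theorem le_cosh_sqrt_two_mul_sub_one {b : ℝ} (hb : 1 ≤ b) : b ≤ cosh (√(2 * (b - 1))) := by
  have := one_add_sq_div_two_le_cosh (√(2 * (b - 1)))
  rw [sq_sqrt (by linarith)] at this
  linarith

theorem eval_T_le_cosh_mul (n : ℕ) {u y : ℝ} (hy : 1 ≤ y) (hyu : y ≤ cosh u) :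
    (T ℝ n).eval y ≤ cosh (n * u) := by
  have harcosh : arcosh y ≤ |u| := by
    rw [← arcosh_cosh (abs_nonneg u), arcosh_le_arcosh (by linarith) (cosh_pos _), cosh_abs]
    exact hyu
  rw [← cosh_arcosh hy, T_real_cosh, cosh_le_cosh, Int.cast_natCast, abs_mul, abs_mul,
    abs_of_nonneg (arcosh_nonneg hy)]
  gcongr

theorem abs_eval_le_mul_eval_T_of_one_le {n : ℕ} {P : ℝ[X]} {M x : ℝ} (hP : P.natDegree ≤ n)
    (hPM : ∀ y, |y| ≤ 1 → |P.eval y| ≤ M) (hx : 1 ≤ x) :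
    |P.eval x| ≤ M * (T ℝ n).eval x := by
  have eval_le_eval_T : ∀ Q : ℝ[X], Q.natDegree ≤ n → (∀ y, |y| ≤ 1 → |Q.eval y| ≤ 1) →
      Q.eval x ≤ (T ℝ n).eval x := fun Q hQ hQ1 => by
    simpa using eval_iterate_derivative_le_of_forall_abs_le_one (k := 0) hx
      (degree_le_of_natDegree_le hQ) fun y hy => hQ1 y (abs_le.mpr hy)
  rcases ((abs_nonneg _).trans (hPM 0 (by simp))).eq_or_lt with rfl | hM
  · have hP0 : P = 0 := eq_zero_of_infinite_isRoot P <|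
      (Set.Icc_infinite (by norm_num : (-1 : ℝ) < 1)).mono fun y hy =>
        abs_nonpos_iff.mp (hPM y (abs_le.mpr hy))
    simp [hP0]
  set Q := M⁻¹ • P
  have hQ : Q.natDegree ≤ n := (natDegree_smul_le _ _).trans hP
  have hQ1 : ∀ y, |y| ≤ 1 → |Q.eval y| ≤ 1 := fun y hy => by
    rw [eval_smul, smul_eq_mul, abs_mul, abs_inv, abs_of_pos hM, inv_mul_le_iff₀ hM, mul_one]
    exact hPM y hy
  have hQx : |Q.eval x| ≤ (T ℝ n).eval x := abs_le'.mpr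
    ⟨eval_le_eval_T Q hQ hQ1,
      by simpa using eval_le_eval_T (-Q) (by rwa [natDegree_neg]) (by simpa using hQ1)⟩
  rwa [eval_smul, smul_eq_mul, abs_mul, abs_inv, abs_of_pos hM, inv_mul_le_iff₀ hM] at hQx

theorem abs_eval_le_mul_eval_T_abs {n : ℕ} {P : ℝ[X]} {M x : ℝ} (hP : P.natDegree ≤ n)
    (hPM : ∀ y, |y| ≤ 1 → |P.eval y| ≤ M) (hx : 1 ≤ |x|) :
    |P.eval x| ≤ M * (T ℝ n).eval |x| := by
  rcases le_total 0 x with hx0 | hx0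
  · rw [abs_of_nonneg hx0] at hx ⊢
    exact abs_eval_le_mul_eval_T_of_one_le hP hPM hx
  · rw [abs_of_nonpos hx0] at hx ⊢
    simpa using abs_eval_le_mul_eval_T_of_one_le (P := P.comp (-X))
      (by simpa [natDegree_comp] using hP) (fun y hy => by simpa using hPM (-y) (by rwa [abs_neg]))
      hx

/-- A real polynomial of degree `d` bounded by `M` on `[−1,1]` is bounded
by `cosh(√(2(b−1))·d)·M` on `[−b,b]`, for any `b > 1`. -/
theorem polynomial_growth_cosh_bound (f : Polynomial ℝ) (d : ℕ) (hd : f.natDegree ≤ d)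
    (b : ℝ) (hb : 1 < b) (M : ℝ) (hM : ∀ y : ℝ, |y| ≤ 1 → |f.eval y| ≤ M) :
    ∀ x : ℝ, |x| ≤ b →
      |f.eval x| ≤ Real.cosh (Real.sqrt (2 * (b - 1)) * d) * M := by
  intro x hx
  have hM0 : 0 ≤ M := (abs_nonneg _).trans (hM 0 (by simp))
  rcases le_or_gt |x| 1 with hx1 | hx1
  · exact (hM x hx1).trans (le_mul_of_one_le_left hM0 (one_le_cosh _))
  calc |f.eval x| ≤ M * (T ℝ d).eval |x| := abs_eval_le_mul_eval_T_abs hd hM hx1.le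
    _ ≤ M * cosh (d * √(2 * (b - 1))) := by
      gcongr
      exact eval_T_le_cosh_mul d hx1.le (hx.trans (le_cosh_sqrt_two_mul_sub_one hb.le))
    _ = cosh (√(2 * (b - 1)) * d) * M := by rw [mul_comm, mul_comm (d : ℝ)]
end

section
/- For any 0 < ℓ ≤ ξ₁ ≤ 1, the map z ↦ arcsin((1−ξ₁)z) sends the stadium {z : dist(z, [−1,1]) ≤ ℓ} into the stadium {w : dist(w, [−arcsin(1−ξ₁), arcsin(1−ξ₁)]) ≤ ((1−ξ₁)/ξ₁)·ℓ}. -/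
/-- The principal branch of the complex arcsine,
`arcsin z = −i log(iz + (1 − z²)^{1/2})`. -/
noncomputable def complexArcsin (z : ℂ) : ℂ :=
  -Complex.I * Complex.log (Complex.I * z + (1 - z ^ 2) ^ ((1 : ℂ) / 2))

/-- Membership in the stadium: the set of complex numbers within distance `ℓ` of the real
interval `[−c, c]`. -/
def inStadium (c ℓ : ℝ) (z : ℂ) : Prop :=
  ∃ x : ℝ, |x| ≤ c ∧ ‖z - (x : ℂ)‖ ≤ ℓ

/-! On a disc `‖u‖ ≤ r < 1` the derivative `(1 - u²)^(-1/2)` of `arcsin` has modulus at most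
`(1 - r²)^(-1/2)`, so `arcsin` is Lipschitz there. If `z` is within `ℓ` of `x ∈ [-1, 1]` and
`a = 1 - ξ₁`, then `a z` and `a x` lie in the disc of radius `r = a (1 + ℓ) ≤ 1 - ξ₁²`, on which
`√(1 - r²) ≥ ξ₁`; and `arcsin (a x)` is the real arcsine, which lies in `[-arcsin a, arcsin a]`. -/

open Complex
open scoped Real

lemma cpow_one_div_two_sq (x : ℂ) : (x ^ ((1 : ℂ) / 2)) ^ 2 = x := by
  simp [one_div]

lemma re_cpow_one_div_two_pos {x : ℂ} (hx : x ∈ slitPlane) : 0 < (x ^ ((1 : ℂ) / 2)).re := by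
  have harg : arg x < π := lt_of_le_of_ne (arg_le_pi x) (slitPlane_arg_ne_pi hx)
  rw [show ((1 : ℂ) / 2) = ((1 / 2 : ℝ) : ℂ) by push_cast; rfl, cpow_ofReal_re]
  refine mul_pos (Real.rpow_pos_of_pos (norm_pos_iff.mpr (slitPlane_ne_zero hx)) _)
    (Real.cos_pos_of_mem_Ioo ⟨?_, ?_⟩) <;> linarith [neg_pi_lt_arg x]

lemma one_sub_sq_mem_slitPlane {u : ℂ} (hu : ‖u‖ < 1) : 1 - u ^ 2 ∈ slitPlane := by
  rw [sub_eq_add_neg]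
  refine mem_slitPlane_of_norm_lt_one ?_
  rw [norm_neg, norm_pow]
  nlinarith [norm_nonneg u]

/-- `v = I u + √(1 - u²)` has inverse `√(1 - u²) - I u`, so `re v + re v⁻¹ = 2 re √(1 - u²) > 0`,
while `re v ≤ 0` would force `re v⁻¹ ≤ 0`. -/
lemma re_I_mul_add_sqrt_one_sub_sq_pos {u : ℂ} (hu : 1 - u ^ 2 ∈ slitPlane) :
    0 < (I * u + (1 - u ^ 2) ^ ((1 : ℂ) / 2)).re := by
  set s := (1 - u ^ 2) ^ ((1 : ℂ) / 2)
  set v := I * u + s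
  have hs : 0 < s.re := re_cpow_one_div_two_pos hu
  have hvw : v * (s - I * u) = 1 := by
    have hs2 : s ^ 2 = 1 - u ^ 2 := cpow_one_div_two_sq _
    linear_combination hs2 - u ^ 2 * I_sq
  have hw : s - I * u = v⁻¹ := eq_inv_of_mul_eq_one_right hvw
  have hsum : v.re + (v⁻¹).re = 2 * s.re := by
    rw [← hw]
    simp only [v, add_re, sub_re, mul_re, I_re, I_im, zero_mul, one_mul, zero_sub]
    ring
  by_contra! hv
  have hv_inv : (v⁻¹).re ≤ 0 := by
    rw [inv_re]; exact div_nonpos_of_nonpos_of_nonneg hv (normSq_nonneg v)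
  linarith

lemma hasDerivAt_complexArcsin {u : ℂ} (hu : 1 - u ^ 2 ∈ slitPlane) :
    HasDerivAt complexArcsin ((1 - u ^ 2) ^ ((1 : ℂ) / 2))⁻¹ u := by
  have hsqrt : HasDerivAt (fun w : ℂ => (1 - w ^ 2) ^ ((1 : ℂ) / 2))
      (-u / (1 - u ^ 2) ^ ((1 : ℂ) / 2)) u := by
    convert ((hasDerivAt_pow 2 u).const_sub 1).cpow_const hu using 1
    rw [show (1 : ℂ) / 2 - 1 = -(1 / 2) by norm_num, cpow_neg]
    ring
  have hsum : HasDerivAt (fun w : ℂ => I * w + (1 - w ^ 2) ^ ((1 : ℂ) / 2))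
      (I + -u / (1 - u ^ 2) ^ ((1 : ℂ) / 2)) u :=
    ((hasDerivAt_id' u).const_mul I |>.congr_deriv (mul_one I)).add hsqrt
  have hv := re_I_mul_add_sqrt_one_sub_sq_pos hu
  have harcsin : HasDerivAt complexArcsin
      (-I * ((I + -u / (1 - u ^ 2) ^ ((1 : ℂ) / 2)) / (I * u + (1 - u ^ 2) ^ ((1 : ℂ) / 2)))) u :=
    (hsum.clog (mem_slitPlane_iff.mpr (Or.inl hv))).const_mul (-I)
  convert harcsin using 1
  have hs_re := re_cpow_one_div_two_pos hu
  generalize (1 - u ^ 2) ^ ((1 : ℂ) / 2) = s at hv hs_re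
  have hs : s ≠ 0 := fun h => hs_re.ne' (by rw [h, zero_re])
  have hv0 : I * u + s ≠ 0 := fun h => hv.ne' (by rw [h, zero_re])
  field_simp
  linear_combination s * I_sq

lemma complexArcsin_ofReal {t : ℝ} (ht : |t| ≤ 1) : complexArcsin t = Real.arcsin t := by
  obtain ⟨ht₁, ht₂⟩ := abs_le.mp ht
  have h1 : 0 ≤ 1 - t ^ 2 := by nlinarith
  have hsqrt : (1 - (t : ℂ) ^ 2) ^ ((1 : ℂ) / 2) = (√(1 - t ^ 2) : ℝ) := by
    rw [Real.sqrt_eq_rpow, ofReal_cpow h1]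
    push_cast
    rfl
  have hexp : I * t + (√(1 - t ^ 2) : ℝ) = exp (Real.arcsin t * I) := by
    rw [exp_mul_I, ← ofReal_cos, ← ofReal_sin, Real.cos_arcsin, Real.sin_arcsin ht₁ ht₂]
    ring
  have him : (Real.arcsin t * I : ℂ).im = Real.arcsin t := by simp
  have hlo : -π < (Real.arcsin t * I : ℂ).im := by
    rw [him]; linarith [Real.neg_pi_div_two_le_arcsin t, Real.pi_pos]
  have hhi : (Real.arcsin t * I : ℂ).im ≤ π := by
    rw [him]; linarith [Real.arcsin_le_pi_div_two t, Real.pi_pos]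
  rw [complexArcsin, hsqrt, hexp, log_exp hlo hhi]
  linear_combination (-(Real.arcsin t : ℂ)) * I_sq

lemma sqrt_one_sub_sq_le_norm_cpow_one_div_two {u : ℂ} {r : ℝ} (hu : ‖u‖ ≤ r) :
    √(1 - r ^ 2) ≤ ‖(1 - u ^ 2) ^ ((1 : ℂ) / 2)‖ := by
  have hnorm_sq : ‖(1 - u ^ 2) ^ ((1 : ℂ) / 2)‖ ^ 2 = ‖1 - u ^ 2‖ := by
    rw [← norm_pow, cpow_one_div_two_sq]
  have hreverse : 1 - ‖u‖ ^ 2 ≤ ‖1 - u ^ 2‖ := by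
    have := norm_sub_norm_le (1 : ℂ) (u ^ 2)
    rwa [norm_one, norm_pow] at this
  rw [Real.sqrt_le_iff]
  refine ⟨norm_nonneg _, ?_⟩
  nlinarith [norm_nonneg u]

lemma norm_complexArcsin_sub_le {r : ℝ} (hr : r < 1) {z w : ℂ} (hz : ‖z‖ ≤ r) (hw : ‖w‖ ≤ r) :
    ‖complexArcsin z - complexArcsin w‖ ≤ (√(1 - r ^ 2))⁻¹ * ‖z - w‖ := by
  have hr₀ : 0 ≤ r := (norm_nonneg z).trans hz
  have hpos : 0 < √(1 - r ^ 2) := Real.sqrt_pos.mpr (by nlinarith)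
  refine (convex_closedBall (0 : ℂ) r).norm_image_sub_le_of_norm_hasDerivWithin_le
    (f' := fun u => ((1 - u ^ 2) ^ ((1 : ℂ) / 2))⁻¹) (fun u hu => ?_) (fun u hu => ?_)
    (by simpa using hw) (by simpa using hz)
  · have hu' : ‖u‖ < 1 := (mem_closedBall_zero_iff.mp hu).trans_lt hr
    exact (hasDerivAt_complexArcsin (one_sub_sq_mem_slitPlane hu')).hasDerivWithinAt
  · rw [norm_inv]
    exact inv_anti₀ hpos
      (sqrt_one_sub_sq_le_norm_cpow_one_div_two (mem_closedBall_zero_iff.mp hu))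

lemma abs_arcsin_le_arcsin {x c : ℝ} (h : |x| ≤ c) : |Real.arcsin x| ≤ Real.arcsin c := by
  rw [abs_le, ← Real.arcsin_neg]
  exact ⟨Real.arcsin_le_arcsin (by linarith [neg_abs_le x]),
    Real.arcsin_le_arcsin ((le_abs_self x).trans h)⟩

/-- For `0 < ℓ ≤ ξ₁ ≤ 1`, the map `z ↦ arcsin((1−ξ₁)z)` sends the stadium
of radius `ℓ` around `[−1,1]` into the stadium of radius `((1−ξ₁)/ξ₁)·ℓ` around
`[−arcsin(1−ξ₁), arcsin(1−ξ₁)]`. -/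
theorem arcsin_maps_stadium_into_stadium (ℓ ξ₁ : ℝ)
    (hℓ : 0 < ℓ) (hℓξ : ℓ ≤ ξ₁) (hξ : ξ₁ ≤ 1) :
    ∀ z : ℂ, inStadium 1 ℓ z →
      inStadium (Real.arcsin (1 - ξ₁)) ((1 - ξ₁) / ξ₁ * ℓ)
        (complexArcsin ((1 - ξ₁ : ℝ) * z)) := by
  rintro z ⟨x, hx, hzx⟩
  have hξ₀ : 0 < ξ₁ := hℓ.trans_le hℓξ
  set a := 1 - ξ₁
  have ha₀ : 0 ≤ a := by linarith
  have hax : |a * x| ≤ a := by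
    rw [abs_mul, abs_of_nonneg ha₀]; exact mul_le_of_le_one_right ha₀ hx
  refine ⟨Real.arcsin (a * x), abs_arcsin_le_arcsin hax, ?_⟩
  set r := a * (1 + ℓ) with hr_def
  have hr₀ : 0 ≤ r := by positivity
  have hr : r ≤ 1 - ξ₁ ^ 2 := by nlinarith
  have hξr : ξ₁ ≤ √(1 - r ^ 2) := Real.le_sqrt_of_sq_le (by nlinarith)
  have hdiff : ‖(a : ℂ) * z - (a * x : ℝ)‖ ≤ a * ℓ := by
    rw [ofReal_mul, ← mul_sub, norm_mul, norm_real, Real.norm_of_nonneg ha₀]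
    exact mul_le_mul_of_nonneg_left hzx ha₀
  have hx_a : ‖((a * x : ℝ) : ℂ)‖ ≤ a := by rwa [norm_real, Real.norm_eq_abs]
  have hz_r : ‖(a : ℂ) * z‖ ≤ r := by
    have := norm_le_norm_add_norm_sub' ((a : ℂ) * z) ((a * x : ℝ) : ℂ)
    rw [hr_def]; linarith
  rw [← complexArcsin_ofReal (hax.trans (by linarith))]
  calc _ ≤ (√(1 - r ^ 2))⁻¹ * ‖(a : ℂ) * z - (a * x : ℝ)‖ :=
        norm_complexArcsin_sub_le (by nlinarith) hz_r (hx_a.trans (by nlinarith))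
    _ ≤ ξ₁⁻¹ * (a * ℓ) := by gcongr
    _ = a / ξ₁ * ℓ := by ring
end
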